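/- arXiv:1904.00366 — 6 statements merged into one kernel-verified Lean document; each statement's English description precedes it below -/
import Mathlib

section
/- Let X be a compact metric space and f : X → X a continuous map. Define the relation ~ on the chain recurrent set CR(f) by: x ~ y iff for every δ > 0 there exist positive integers m and N such that for every integer n ≥ N there exist two δ-chains (x_i)_{i=0}^{mn} and (y_i)_{i=0}^{mn} of f consisting of points of CR(f) with x_0 = y_{mn} = x and x_{mn} = y_0 = y. Then ~ is an equivalence relation on CR(f). -/
open Metric Filter Set
open scoped Classical

section Defs

variable {X : Type*} [MetricSpace X]

/-- `(c i)_{i=0}^k` is a δ-chain of `f`. -/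
def IsChain' (f : X → X) (δ : ℝ) (c : ℕ → X) (k : ℕ) : Prop :=
  ∀ i < k, dist (f (c i)) (c (i + 1)) ≤ δ

/-- The chain recurrent set of `f`. -/
def CR (f : X → X) : Set X :=
  {x | ∀ δ > 0, ∃ k > 0, ∃ c : ℕ → X, IsChain' f δ c k ∧ c 0 = x ∧ c k = x}

/-- The chain relation `~` on `CR f`. -/
def ChainRel (f : X → X) (x y : X) : Prop :=
  ∀ δ > 0, ∃ m > 0, ∃ N > 0, ∀ n ≥ N,
    (∃ c : ℕ → X, IsChain' f δ c (m * n) ∧ (∀ i ≤ m * n, c i ∈ CR f) ∧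
      c 0 = x ∧ c (m * n) = y) ∧
    (∃ c : ℕ → X, IsChain' f δ c (m * n) ∧ (∀ i ≤ m * n, c i ∈ CR f) ∧
      c 0 = y ∧ c (m * n) = x)

/-- Property* for a pair `(z, w)`, with cycles lying in `CR f`. -/
def PropertyStar (f : X → X) (z w : X) : Prop :=
  ∃ r > 0, ∀ δ > 0, ∃ k > 0, ∃ c c' : ℕ → X,
    IsChain' f δ c k ∧ IsChain' f δ c' k ∧
    (∀ i ≤ k, c i ∈ CR f) ∧ (∀ i ≤ k, c' i ∈ CR f) ∧
    c 0 = z ∧ c k = z ∧ c' 0 = w ∧ c' k = w ∧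
    ∀ i ≤ k, dist (c i) (c' i) > r

/-- Property* for a pair `(z, w)` (cycles not required to lie in `CR f`). -/
def PropertyStar' (f : X → X) (z w : X) : Prop :=
  ∃ r > 0, ∀ δ > 0, ∃ k > 0, ∃ c c' : ℕ → X,
    IsChain' f δ c k ∧ IsChain' f δ c' k ∧
    c 0 = z ∧ c k = z ∧ c' 0 = w ∧ c' k = w ∧
    ∀ i ≤ k, dist (c i) (c' i) > r

/-- Omega-limit set of the point `(x, y)` under `f × f`. -/
def OmegaLimit2 (f : X → X) (x y : X) : Set (X × X) :=
  {p | ∃ φ : ℕ → ℕ, StrictMono φ ∧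
    Tendsto (fun n => (f^[φ n] x, f^[φ n] y)) atTop (nhds p)}

/-- Omega-limit set of a point under `f`. -/
def OmegaLimit1 (f : X → X) (x : X) : Set X :=
  {p | ∃ φ : ℕ → ℕ, StrictMono φ ∧ Tendsto (fun n => f^[φ n] x) atTop (nhds p)}

/-- `(x, y)` is a DC1-pair for `f`. -/
def DC1Pair (f : X → X) (x y : X) : Prop :=
  (∀ δ > 0, Filter.limsup (fun n : ℕ =>
      (((Finset.range n).filter fun i => dist (f^[i] x) (f^[i] y) < δ).card : ℝ) / n)
      Filter.atTop = 1) ∧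
  (∃ δ₀ > 0, Filter.limsup (fun n : ℕ =>
      (((Finset.range n).filter fun i => dist (f^[i] x) (f^[i] y) > δ₀).card : ℝ) / n)
      Filter.atTop = 1)

/-- `f` exhibits distributional chaos of type 1. -/
def ExhibitsDC1 (f : X → X) : Prop :=
  ∃ S : Set X, ¬ S.Countable ∧ ∀ x ∈ S, ∀ y ∈ S, x ≠ y → DC1Pair f x y

/-- `(x, y)` is a Li-Yorke pair for `f`. -/
def LiYorkePair (f : X → X) (x y : X) : Prop :=
  Filter.liminf (fun n => dist (f^[n] x) (f^[n] y)) Filter.atTop = 0 ∧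
  Filter.limsup (fun n => dist (f^[n] x) (f^[n] y)) Filter.atTop > 0

/-- `(x, y)` is a proximal pair for `f`. -/
def ProximalPair (f : X → X) (x y : X) : Prop :=
  Filter.liminf (fun n => dist (f^[n] x) (f^[n] y)) Filter.atTop = 0

/-- `(x, y)` is a distal pair for `f`. -/
def DistalPair (f : X → X) (x y : X) : Prop :=
  0 < ⨅ n : ℕ, dist (f^[n] x) (f^[n] y)

/-- `f` has the limit shadowing property. -/
def LimitShadowing (f : X → X) : Prop :=
  ∀ x : ℕ → X, Tendsto (fun i => dist (f (x i)) (x (i + 1))) atTop (nhds 0) →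
    ∃ p : X, Tendsto (fun i => dist (f^[i] p) (x i)) atTop (nhds 0)

/-- The restriction of `f` to `CR f` has the shadowing property. -/
def ShadowingOnCR (f : X → X) : Prop :=
  ∀ ε > 0, ∃ δ > 0, ∀ x : ℕ → X, (∀ i, x i ∈ CR f) →
    (∀ i, dist (f (x i)) (x (i + 1)) ≤ δ) →
    ∃ p ∈ CR f, ∀ i, dist (f^[i] p) (x i) ≤ ε

/-- Topological entropy of `f` relative to the cover `U`. -/
noncomputable def entropyOfCover (f : X → X) {ι : Type*} (U : ι → Set X) : ℝ :=
  Filter.limsup (fun n : ℕ =>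
    Real.log ((sInf {m : ℕ | ∃ s : Finset (Fin n → ι), s.card = m ∧
      (⋃ g ∈ s, ⋂ i : Fin n, f^[(i : ℕ)] ⁻¹' U (g i)) = Set.univ} : ℕ) : ℝ) / n)
    Filter.atTop

/-- `(x, y)` is an entropy pair for `f`. -/
def EntropyPair (f : X → X) (x y : X) : Prop :=
  x ≠ y ∧ ∀ A B : Set X, IsClosed A → IsClosed B → x ∈ interior A → y ∈ interior B →
    Disjoint A B → 0 < entropyOfCover f (fun b : Bool => if b then Aᶜ else Bᶜ)

end Defs

/-!
Symmetry is built into the definition, and transitivity follows by concatenating chains, the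
lengths `m₁ (m₂ n)` and `m₂ (m₁ n)` adding up to a multiple of `n`. Reflexivity carries the
content: a point `x ∈ CR f` must be joined to itself by δ-chains running inside `CR f`. By
compactness, for small `δ₀` every point lying on a `δ₀`-cycle is close to `CR f`; moving each
point of a fine cycle through `x` to a nearby point of `CR f` only spoils the chain condition a
little, by uniform continuity of `f`. Repeating the resulting cycle `n` times gives the chains of
length `k n` required by `ChainRel`.
-/

section ChainRecurrence

variable {X : Type*} [MetricSpace X] {f : X → X} {δ : ℝ} {c : ℕ → X} {k : ℕ}

theorem IsChain'.mono {δ' : ℝ} (hδ : δ ≤ δ') (hc : IsChain' f δ c k) : IsChain' f δ' c k :=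
  fun i hi => (hc i hi).trans hδ

def HasChain (f : X → X) (δ : ℝ) (S : Set X) (k : ℕ) (x y : X) : Prop :=
  ∃ c : ℕ → X, IsChain' f δ c k ∧ (∀ i ≤ k, c i ∈ S) ∧ c 0 = x ∧ c k = y

theorem chainRel_iff {x y : X} :
    ChainRel f x y ↔ ∀ δ > 0, ∃ m > 0, ∃ N > 0, ∀ n ≥ N,
      HasChain f δ (CR f) (m * n) x y ∧ HasChain f δ (CR f) (m * n) y x :=
  Iff.rfl

namespace HasChain

variable {S : Set X} {x y z : X}

theorem left_mem (h : HasChain f δ S k x y) : x ∈ S := by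
  obtain ⟨c, -, hcS, hc0, -⟩ := h
  exact hc0 ▸ hcS 0 (Nat.zero_le k)

theorem refl (hx : x ∈ S) : HasChain f δ S 0 x x :=
  ⟨fun _ => x, fun _ hi => absurd hi (Nat.not_lt_zero _), fun _ _ => hx, rfl, rfl⟩

theorem trans {k₁ k₂ : ℕ} (h₁ : HasChain f δ S k₁ x y) (h₂ : HasChain f δ S k₂ y z) :
    HasChain f δ S (k₁ + k₂) x z := by
  obtain ⟨c, hc, hcS, hc0, hck⟩ := h₁
  obtain ⟨d, hd, hdS, hd0, hdk⟩ := h₂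
  have hjoin : c k₁ = d 0 := hck.trans hd0.symm
  refine ⟨fun i => if i < k₁ then c i else d (i - k₁), fun i hi => ?_, fun i hi => ?_, ?_, ?_⟩
  · dsimp only
    rcases lt_trichotomy (i + 1) k₁ with h | h | h
    · rw [if_pos (by omega), if_pos h]
      exact hc i (by omega)
    · rw [if_pos (by omega), if_neg (by omega), show i + 1 - k₁ = 0 by omega, ← hjoin, ← h]
      exact hc i (by omega)
    · rw [if_neg (by omega), if_neg (by omega), show i + 1 - k₁ = i - k₁ + 1 by omega]
      exact hd _ (by omega)
  · dsimp only
    split_ifs with h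
    · exact hcS i h.le
    · exact hdS _ (by omega)
  · dsimp only
    split_ifs with h
    · exact hc0
    · rw [Nat.eq_zero_of_not_pos h, ← hjoin, Nat.eq_zero_of_not_pos h, hc0]
  · simp [hdk]

theorem pow (h : HasChain f δ S k x x) (n : ℕ) : HasChain f δ S (k * n) x x := by
  induction n with
  | zero => exact refl h.left_mem
  | succ n ih => exact ih.trans h

end HasChain

theorem IsChain'.hasChain_segment (hc : IsChain' f δ c k) {i j : ℕ} (hij : i ≤ j) (hjk : j ≤ k) :
    HasChain f δ univ (j - i) (c i) (c j) := by
  refine ⟨fun t => c (i + t), fun t ht => ?_, fun _ _ => trivial, rfl, ?_⟩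
  · simpa only [← add_assoc] using hc (i + t) (by omega)
  · dsimp only
    rw [Nat.add_sub_cancel' hij]

def CRd (f : X → X) (δ : ℝ) : Set X :=
  {x | ∃ k > 0, ∃ c : ℕ → X, IsChain' f δ c k ∧ c 0 = x ∧ c k = x}

theorem CRd_mono {δ' : ℝ} (hδ : δ ≤ δ') : CRd f δ ⊆ CRd f δ' := by
  rintro x ⟨k, hk, c, hc, hc0, hck⟩
  exact ⟨k, hk, c, hc.mono hδ, hc0, hck⟩

theorem mem_CRd_of_isChain'_of_loop (hc : IsChain' f δ c k) (hk : 0 < k) (hloop : c k = c 0)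
    {i : ℕ} (hi : i ≤ k) : c i ∈ CRd f δ := by
  have hinit := hc.hasChain_segment (Nat.zero_le i) hi
  rw [← hloop] at hinit
  have hcycle := (hc.hasChain_segment hi le_rfl).trans hinit
  rw [show k - i + (i - 0) = k by omega] at hcycle
  obtain ⟨d, hd, -, hd0, hdk⟩ := hcycle
  exact ⟨k, hk, d, hd, hd0, hdk⟩

theorem exists_pos_isChain'_of_dist_le (hf : UniformContinuous f) (hδ : 0 < δ) :
    ∃ η > 0, ∀ (c d : ℕ → X) (k : ℕ), IsChain' f η c k →
      (∀ i ≤ k, dist (d i) (c i) ≤ η) → IsChain' f δ d k := by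
  obtain ⟨ρ, hρ, hfρ⟩ := Metric.uniformContinuous_iff.1 hf (δ / 3) (by positivity)
  refine ⟨min (ρ / 2) (δ / 3), by positivity, fun c d k hc hdc i hi => ?_⟩
  have hη₁ : min (ρ / 2) (δ / 3) ≤ ρ / 2 := min_le_left _ _
  have hη₂ : min (ρ / 2) (δ / 3) ≤ δ / 3 := min_le_right _ _
  have hfi : dist (f (d i)) (f (c i)) < δ / 3 := hfρ (by linarith [hdc i hi.le])
  calc dist (f (d i)) (d (i + 1))
      ≤ dist (f (d i)) (f (c i)) + dist (f (c i)) (c (i + 1)) + dist (c (i + 1)) (d (i + 1)) :=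
        dist_triangle4 _ _ _ _
    _ ≤ δ := by linarith [hc i hi, dist_comm (c (i + 1)) (d (i + 1)), hdc (i + 1) hi]

theorem mem_CR_of_forall_mem_closure_CRd (hf : UniformContinuous f) {a : X}
    (ha : ∀ δ > 0, a ∈ closure (CRd f δ)) : a ∈ CR f := by
  intro δ hδ
  obtain ⟨η, hη, hperturb⟩ := exists_pos_isChain'_of_dist_le hf hδ
  obtain ⟨z, ⟨k, hk, c, hc, hc0, hck⟩, haz⟩ := Metric.mem_closure_iff.1 (ha η hη) η hη
  refine ⟨k, hk, fun i => if c i = z then a else c i, hperturb _ _ k hc fun i _ => ?_,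
    by simp [hc0], by simp [hck]⟩
  split_ifs with h
  · rw [h]
    exact haz.le
  · simpa using hη.le

theorem exists_retract_thickening (S : Set X) {η : ℝ} (hη : 0 < η) :
    ∃ r : X → X, (∀ z ∈ S, r z = z) ∧ ∀ z ∈ thickening η S, r z ∈ S ∧ dist (r z) z < η := by
  have hsnap : ∀ z, ∃ w, (z ∈ S → w = z) ∧ (z ∈ thickening η S → w ∈ S ∧ dist w z < η) := by
    intro z
    by_cases hz : z ∈ S
    · exact ⟨z, fun _ => rfl, fun _ => ⟨hz, by simpa using hη⟩⟩
    by_cases hzη : z ∈ thickening η S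
    · obtain ⟨w, hw, hzw⟩ := mem_thickening_iff.1 hzη
      exact ⟨w, fun h => absurd h hz, fun _ => ⟨hw, by rwa [dist_comm]⟩⟩
    · exact ⟨z, fun _ => rfl, fun h => absurd h hzη⟩
  choose r hr using hsnap
  exact ⟨r, fun z hz => (hr z).1 hz, fun z hz => (hr z).2 hz⟩

theorem exists_CRd_subset_thickening [CompactSpace X] (hf : UniformContinuous f) {η : ℝ}
    (hη : 0 < η) : ∃ δ > 0, CRd f δ ⊆ thickening η (CR f) := by
  have hanti : Antitone fun n : ℕ => closure (CRd f (1 / (n + 1))) :=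
    fun m n hmn => closure_mono (CRd_mono (Nat.one_div_le_one_div hmn))
  obtain ⟨n, hn⟩ := exists_subset_nhds_of_isCompact' hanti.directed_ge
    (fun _ => isClosed_closure.isCompact) (fun _ => isClosed_closure)
    (U := thickening η (CR f)) fun a ha => by
      refine isOpen_thickening.mem_nhds (self_subset_thickening hη _ ?_)
      refine mem_CR_of_forall_mem_closure_CRd hf fun δ hδ => ?_
      obtain ⟨n, hn⟩ := exists_nat_one_div_lt hδ
      exact closure_mono (CRd_mono hn.le) (mem_iInter.1 ha n)
  exact ⟨1 / (n + 1), by positivity, subset_closure.trans hn⟩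

theorem exists_hasChain_CR_of_mem_CR [CompactSpace X] (hf : UniformContinuous f) {x : X}
    (hx : x ∈ CR f) (hδ : 0 < δ) : ∃ k > 0, HasChain f δ (CR f) k x x := by
  obtain ⟨η, hη, hperturb⟩ := exists_pos_isChain'_of_dist_le hf hδ
  obtain ⟨δ₀, hδ₀, hsub⟩ := exists_CRd_subset_thickening hf hη
  obtain ⟨k, hk, c, hc, hc0, hck⟩ := hx (min δ₀ η) (lt_min hδ₀ hη)
  obtain ⟨r, hrS, hr⟩ := exists_retract_thickening (CR f) hη
  have hnear : ∀ i ≤ k, c i ∈ thickening η (CR f) := fun i hi =>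
    hsub (CRd_mono (min_le_left _ _) (mem_CRd_of_isChain'_of_loop hc hk (hck.trans hc0.symm) hi))
  refine ⟨k, hk, r ∘ c,
    hperturb c _ k (hc.mono (min_le_right _ _)) fun i hi => (hr _ (hnear i hi)).2.le,
    fun i hi => (hr _ (hnear i hi)).1, ?_, ?_⟩
  · simp [hc0, hrS x hx]
  · simp [hck, hrS x hx]

namespace ChainRel

variable {x y z : X}

theorem refl [CompactSpace X] (hf : UniformContinuous f) (hx : x ∈ CR f) : ChainRel f x x := by
  intro δ hδ
  obtain ⟨k, hk, hcycle⟩ := exists_hasChain_CR_of_mem_CR hf hx hδ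
  exact ⟨k, hk, 1, one_pos, fun n _ => ⟨hcycle.pow n, hcycle.pow n⟩⟩

theorem symm (h : ChainRel f x y) : ChainRel f y x := by
  intro δ hδ
  obtain ⟨m, hm, N, hN, hchains⟩ := h δ hδ
  exact ⟨m, hm, N, hN, fun n hn => (hchains n hn).symm⟩

theorem trans (hxy : ChainRel f x y) (hyz : ChainRel f y z) : ChainRel f x z := by
  rw [chainRel_iff] at hxy hyz ⊢
  intro δ hδ
  obtain ⟨m₁, hm₁, N₁, hN₁, hxy⟩ := hxy δ hδ
  obtain ⟨m₂, hm₂, N₂, hN₂, hyz⟩ := hyz δ hδ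
  refine ⟨2 * m₁ * m₂, by positivity, max N₁ N₂, hN₁.trans_le (le_max_left _ _), fun n hn => ?_⟩
  have hlen : m₁ * (m₂ * n) + m₂ * (m₁ * n) = 2 * m₁ * m₂ * n := by ring
  have hn₁ : m₂ * n ≥ N₁ := (le_of_max_le_left hn).trans (Nat.le_mul_of_pos_left n hm₂)
  have hn₂ : m₁ * n ≥ N₂ := (le_of_max_le_right hn).trans (Nat.le_mul_of_pos_left n hm₁)
  obtain ⟨hxy, hyx⟩ := hxy (m₂ * n) hn₁
  obtain ⟨hyz, hzy⟩ := hyz (m₁ * n) hn₂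
  exact ⟨hlen ▸ hxy.trans hyz, (add_comm _ _).trans hlen ▸ hzy.trans hyx⟩

end ChainRel

end ChainRecurrence

/-- the chain relation is an equivalence relation on `CR f`. -/
theorem chainRel_is_equivalence {X : Type*} [MetricSpace X] [CompactSpace X]
    (f : X → X) (hf : Continuous f) :
    (∀ x ∈ CR f, ChainRel f x x) ∧
    (∀ x ∈ CR f, ∀ y ∈ CR f, ChainRel f x y → ChainRel f y x) ∧
    (∀ x ∈ CR f, ∀ y ∈ CR f, ∀ z ∈ CR f,
      ChainRel f x y → ChainRel f y z → ChainRel f x z) :=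
  ⟨fun _ hx => .refl (CompactSpace.uniformContinuous_of_continuous hf) hx,
    fun _ _ _ _ => .symm, fun _ _ _ _ _ _ => .trans⟩
end

section
/- Let X be a compact metric space and f : X → X continuous. Then the chain recurrent set of the restriction f|_{CR(f)} : CR(f) → CR(f) equals CR(f); that is, every chain recurrent point of f is chain recurrent for the restricted map, where chains are required to lie inside CR(f). -/
open Metric Filter Set
open scoped Classical

/-!
Points on sufficiently fine cycles of `f` lie uniformly close to `CR f`: a limit of points on
ever finer cycles is chain recurrent, since moving the base point of a cycle a little costs
little by continuity, and compactness of `X` turns this into a uniform statement. So given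
`x ∈ CR f` and `δ > 0`, take a fine cycle through `x` and replace each of its points by a
nearby point of `CR f`, keeping `x` itself; uniform continuity of `f` keeps the result a
`δ`-cycle.
-/

section ChainCycles

variable {X : Type*} [MetricSpace X] {f : X → X}

def cyclePts (f : X → X) (η : ℝ) : Set X :=
  {x | ∃ k > 0, ∃ c : ℕ → X, IsChain' f η c k ∧ c 0 = x ∧ c k = x}

lemma IsChain'.mono_s3 {η η' : ℝ} {c : ℕ → X} {k : ℕ} (hc : IsChain' f η c k)
    (h : η ≤ η') : IsChain' f η' c k :=
  fun i hi => (hc i hi).trans h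

lemma cyclePts_mono {η η' : ℝ} (h : η ≤ η') : cyclePts f η ⊆ cyclePts f η' := by
  rintro x ⟨k, hk, c, hc, hc0, hck⟩
  exact ⟨k, hk, c, hc.mono_s3 h, hc0, hck⟩

lemma IsChain'.dist_mod_le {η : ℝ} {c : ℕ → X} {k : ℕ} (hc : IsChain' f η c k)
    (hk : 0 < k) (hck : c k = c 0) (n : ℕ) : dist (f (c (n % k))) (c ((n + 1) % k)) ≤ η := by
  have hn := Nat.mod_lt n hk
  rw [← Nat.mod_add_mod]
  rcases Nat.lt_or_ge (n % k + 1) k with hlt | hge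
  · rw [Nat.mod_eq_of_lt hlt]
    exact hc _ hn
  · have heq : n % k + 1 = k := by omega
    have := hc _ hn
    rw [heq] at this
    rwa [heq, Nat.mod_self, ← hck]

lemma mem_cyclePts_of_isChain' {η : ℝ} {c : ℕ → X} {k : ℕ} (hc : IsChain' f η c k)
    (hk : 0 < k) (hck : c k = c 0) {i : ℕ} (hi : i ≤ k) : c i ∈ cyclePts f η := by
  -- rotate the cycle so that it starts at its `i`-th point
  have hci : c (i % k) = c i := by
    rcases hi.lt_or_eq with hlt | rfl
    · rw [Nat.mod_eq_of_lt hlt]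
    · rw [Nat.mod_self, hck]
  refine ⟨k, hk, fun j => c ((i + j) % k), fun j _ => hc.dist_mod_le hk hck (i + j), ?_, ?_⟩
  · simpa using hci
  · simpa using hci

lemma IsChain'.of_dist_le {ε η γ : ℝ} {c d : ℕ → X} {k : ℕ} (hc : IsChain' f η c k)
    (hf : ∀ i < k, dist (f (d i)) (f (c i)) ≤ ε) (hcd : ∀ i ≤ k, dist (c i) (d i) ≤ γ) :
    IsChain' f (ε + η + γ) d k := fun i hi =>
  calc dist (f (d i)) (d (i + 1))
      ≤ dist (f (d i)) (f (c i)) + dist (f (c i)) (c (i + 1)) + dist (c (i + 1)) (d (i + 1)) :=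
        dist_triangle4 _ _ _ _
    _ ≤ ε + η + γ := add_le_add_three (hf i hi) (hc i hi) (hcd (i + 1) hi)

lemma mem_CR_iff {x : X} : x ∈ CR f ↔ ∀ δ > 0, x ∈ cyclePts f δ := Iff.rfl

lemma mem_cyclePts_of_dist_le {ε η γ : ℝ} {x y : X} (hy : y ∈ cyclePts f η)
    (hfxy : dist (f x) (f y) ≤ ε) (hxy : dist y x ≤ γ) : x ∈ cyclePts f (ε + η + γ) := by
  obtain ⟨k, hk, c, hc, hc0, hck⟩ := hy
  refine ⟨k, hk, fun i => if c i = y then x else c i,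
    hc.of_dist_le (fun i _ => ?_) (fun i _ => ?_), by simp [hc0], by simp [hck]⟩
  · split_ifs with h
    · rwa [h]
    · simpa using dist_nonneg.trans hfxy
  · split_ifs with h
    · rwa [h]
    · simpa using dist_nonneg.trans hxy

lemma iInter_closure_cyclePts_subset_CR (hf : Continuous f) :
    ⋂ n : ℕ, closure (cyclePts f (1 / (n + 1))) ⊆ CR f := by
  refine fun x hx => mem_CR_iff.mpr fun δ hδ => ?_
  obtain ⟨γ, hγ, hfγ⟩ := Metric.continuous_iff.mp hf x (δ / 3) (by positivity)
  obtain ⟨n, hn⟩ := exists_nat_one_div_lt (show 0 < δ / 3 by positivity)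
  obtain ⟨y, hy, hxy⟩ :=
    Metric.mem_closure_iff.mp (mem_iInter.mp hx n) (min γ (δ / 3)) (by positivity)
  have hfxy : dist (f x) (f y) ≤ δ / 3 := by
    rw [dist_comm]
    exact (hfγ y (by rw [dist_comm]; exact hxy.trans_le (min_le_left _ _))).le
  rw [dist_comm] at hxy
  exact cyclePts_mono (by linarith)
    (mem_cyclePts_of_dist_le hy hfxy (hxy.le.trans (min_le_right _ _)))

lemma exists_cyclePts_subset_thickening [CompactSpace X] (hf : Continuous f) {ε : ℝ}
    (hε : 0 < ε) : ∃ η > 0, cyclePts f η ⊆ thickening ε (CR f) := by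
  obtain ⟨n, hn⟩ := exists_subset_nhds_of_isCompact'
    (V := fun n : ℕ => closure (cyclePts f (1 / (n + 1))))
    (directed_of_isDirected_le fun i j hij => closure_mono (cyclePts_mono (by gcongr)))
    (fun _ => isClosed_closure.isCompact) (fun _ => isClosed_closure)
    (fun x hx => isOpen_thickening.mem_nhds
      (self_subset_thickening hε _ (iInter_closure_cyclePts_subset_CR hf hx)))
  exact ⟨1 / (n + 1), by positivity, subset_closure.trans hn⟩

lemma exists_isChain'_mem_of_mem_thickening {S : Set X} {ε η ρ : ℝ} {c : ℕ → X} {k : ℕ}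
    (hc : IsChain' f η c k) (hcS : ∀ i ≤ k, c i ∈ thickening ρ S)
    (hf : ∀ a b, dist a b < ρ → dist (f a) (f b) ≤ ε) :
    ∃ d : ℕ → X, IsChain' f (ε + η + ρ) d k ∧ (∀ i ≤ k, d i ∈ S) ∧
      ∀ i ≤ k, c i ∈ S → d i = c i := by
  have (p : X) :
      ∃ q, p ∈ thickening ρ S → q ∈ S ∧ dist p q < ρ ∧ (p ∈ S → q = p) := by
    by_cases hp : p ∈ thickening ρ S
    · obtain ⟨z, hzS, hpz⟩ := mem_thickening_iff.mp hp
      by_cases hpS : p ∈ S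
      · exact ⟨p, fun _ => ⟨hpS, by simpa using dist_nonneg.trans_lt hpz, fun _ => rfl⟩⟩
      · exact ⟨z, fun _ => ⟨hzS, hpz, fun h => absurd h hpS⟩⟩
    · exact ⟨p, fun h => absurd h hp⟩
  choose g hg using this
  refine ⟨g ∘ c, hc.of_dist_le (fun i hi => ?_) (fun i hi => (hg _ (hcS i hi)).2.1.le),
    fun i hi => (hg _ (hcS i hi)).1, fun i hi => (hg _ (hcS i hi)).2.2⟩
  exact hf _ _ (by rw [dist_comm]; exact (hg _ (hcS i hi.le)).2.1)

end ChainCycles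

/-- `CR (f|_{CR f}) = CR f`. -/
theorem CR_restriction_eq_CR {X : Type*} [MetricSpace X] [CompactSpace X]
    (f : X → X) (hf : Continuous f) :
    {x : X | x ∈ CR f ∧ ∀ δ > 0, ∃ k > 0, ∃ c : ℕ → X,
      IsChain' f δ c k ∧ (∀ i ≤ k, c i ∈ CR f) ∧ c 0 = x ∧ c k = x} = CR f := by
  ext x
  refine ⟨And.left, fun hx => ⟨hx, fun δ hδ => ?_⟩⟩
  obtain ⟨ρ, hρ, hfρ⟩ := Metric.uniformContinuous_iff.mp
    (CompactSpace.uniformContinuous_of_continuous hf) (δ / 3) (by positivity)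
  obtain ⟨η, hη, hηρ⟩ :=
    exists_cyclePts_subset_thickening hf (lt_min hρ (by positivity : 0 < δ / 3))
  obtain ⟨k, hk, c, hc, hc0, hck⟩ := mem_CR_iff.mp hx (min η (δ / 3)) (by positivity)
  have hcS : ∀ i ≤ k, c i ∈ thickening (min ρ (δ / 3)) (CR f) := fun i hi =>
    hηρ (cyclePts_mono (min_le_left _ _) (mem_cyclePts_of_isChain' hc hk (hck.trans hc0.symm) hi))
  obtain ⟨d, hd, hdS, hdc⟩ := exists_isChain'_mem_of_mem_thickening hc hcS
    (fun a b hab => (hfρ (hab.trans_le (min_le_left _ _))).le)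
  refine ⟨k, hk, d, ?_, hdS, ?_, ?_⟩
  · exact hd.mono_s3 (by linarith [min_le_right η (δ / 3), min_le_right ρ (δ / 3)])
  · rw [hdc 0 (Nat.zero_le _) (hc0 ▸ hx), hc0]
  · rw [hdc k le_rfl (hck ▸ hx), hck]
end

section
/- Let X be a compact metric space and f : X → X continuous. If a pair (x, y) ∈ CR(f)² has property* (there exists r > 0 such that for every δ > 0 there are two δ-cycles (x_i)_{i=0}^k and (y_i)_{i=0}^k of f in CR(f) of the same length with x_0 = x_k = x, y_0 = y_k = y, and d(x_i, y_i) > r for all 0 ≤ i ≤ k), then (x, y) is a distal pair for f, i.e., inf_{n ≥ 0} d(fⁿ(x), fⁿ(y)) > 0. -/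
open Metric Filter Set
open scoped Classical

/-!
Repeating a δ-cycle periodically gives δ-chains of every length. For fixed `n` and `δ` small
enough, uniform continuity of `f` on the compact space `X` forces the `n`-th point of a δ-chain
to lie within `r / 4` of the `n`-th point of the orbit of its start. Following the repeated cycles
of property* through `x` and `y` up to time `n` therefore gives
`dist (f^[n] x) (f^[n] y) > r - r / 4 - r / 4 = r / 2`.
-/

section Chains

variable {X : Type*} [MetricSpace X] {f : X → X}

theorem IsChain'.comp_mod {δ : ℝ} {c : ℕ → X} {k : ℕ} (hc : IsChain' f δ c k) (hk : 0 < k)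
    (hcyc : c k = c 0) (n : ℕ) : IsChain' f δ (fun i => c (i % k)) n := by
  have hmod : ∀ j ≤ k, c (j % k) = c j := by
    intro j hj
    rcases hj.lt_or_eq with hj | rfl
    · rw [Nat.mod_eq_of_lt hj]
    · rw [Nat.mod_self, hcyc]
  intro i _
  dsimp only
  have hi : i % k < k := Nat.mod_lt i hk
  rw [← Nat.mod_add_mod, hmod _ hi]
  exact hc _ hi

theorem UniformContinuous.exists_forall_isChain'_dist_iterate_lt (hf : UniformContinuous f)
    (n : ℕ) {ε : ℝ} (hε : 0 < ε) :
    ∃ δ > 0, ∀ c : ℕ → X, IsChain' f δ c n → dist (c n) (f^[n] (c 0)) < ε := by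
  induction n generalizing ε with
  | zero => exact ⟨1, one_pos, fun c _ => by simpa using hε⟩
  | succ n ih =>
    obtain ⟨η, hη, hfη⟩ := Metric.uniformContinuous_iff.mp hf (ε / 2) (half_pos hε)
    obtain ⟨δ, hδ, htrack⟩ := ih hη
    refine ⟨min δ (ε / 2), lt_min hδ (half_pos hε), fun c hc => ?_⟩
    have hprev : dist (c n) (f^[n] (c 0)) < η :=
      htrack c fun i hi => (hc i (by omega)).trans (min_le_left _ _)
    have hlast : dist (f (c n)) (c (n + 1)) ≤ ε / 2 :=
      (hc n n.lt_succ_self).trans (min_le_right _ _)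
    calc dist (c (n + 1)) (f^[n + 1] (c 0))
        ≤ dist (c (n + 1)) (f (c n)) + dist (f (c n)) (f (f^[n] (c 0))) := by
          rw [Function.iterate_succ_apply']
          exact dist_triangle _ _ _
      _ < ε / 2 + ε / 2 := by
          rw [dist_comm] at hlast
          exact add_lt_add_of_le_of_lt hlast (hfη hprev)
      _ = ε := add_halves ε

end Chains

theorem propertyStar_implies_distal_general {X : Type*} [MetricSpace X] [CompactSpace X]
    (f : X → X) (hf : Continuous f) (x y : X)
    (h : PropertyStar f x y) :
    DistalPair f x y := by
  obtain ⟨r, hr, hcycles⟩ := h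
  suffices hsep : ∀ n, r / 2 ≤ dist (f^[n] x) (f^[n] y) from
    (half_pos hr).trans_le (le_ciInf hsep)
  intro n
  obtain ⟨δ, hδ, htrack⟩ := (CompactSpace.uniformContinuous_of_continuous hf)
    |>.exists_forall_isChain'_dist_iterate_lt n (show 0 < r / 4 by positivity)
  obtain ⟨k, hk, c, c', hc, hc', -, -, hcx, hcx', hcy, hcy', hfar⟩ := hcycles δ hδ
  have hnx := htrack _ (hc.comp_mod hk (hcx'.trans hcx.symm) n)
  have hny := htrack _ (hc'.comp_mod hk (hcy'.trans hcy.symm) n)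
  simp only [Nat.zero_mod, hcx, hcy] at hnx hny
  have hfar_n := hfar (n % k) (Nat.mod_lt n hk).le
  have htri := dist_triangle4 (c (n % k)) (f^[n] x) (f^[n] y) (c' (n % k))
  rw [dist_comm (f^[n] y)] at htri
  linarith

/-- property* implies distality. -/
theorem propertyStar_implies_distal {X : Type*} [MetricSpace X] [CompactSpace X]
    (f : X → X) (hf : Continuous f) (x y : X)
    (hx : x ∈ CR f) (hy : y ∈ CR f) (h : PropertyStar f x y) :
    DistalPair f x y :=
  propertyStar_implies_distal_general f hf x y h
end

section
/- Let X be a compact metric space and f : X → X continuous. If (x, y) ∈ X² is a distal pair for f (inf_{n≥0} d(fⁿ(x), fⁿ(y)) > 0), then every (z, w) in the omega-limit set of (x, y) under f × f satisfies property*: there exists r > 0 such that for every δ > 0 there are equal-length δ-cycles of f through z and through w whose corresponding points stay at distance greater than r from each other. -/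
open Metric Filter Set
open scoped Classical

/-
Along the orbit of a distal pair the two coordinates stay at distance at least
`r₀ = inf_n d(fⁿx, fⁿy) > 0`, and so does every omega-limit pair `(z, w)`. Pick times `a < b` at
which `(fᵃx, fᵃy)` and `(fᵇx, fᵇy)` are both close to `(z, w)`. Replacing the two ends of the orbit
segments `fᵃx, …, fᵇx` and `fᵃy, …, fᵇy` by `z` and `w` gives δ-cycles through `z` and `w` (by
uniform continuity of `f` at the first step) whose corresponding points are at distance `≥ r₀`.
-/

section Cycles

variable {X : Type*}

def closeCycle (z : X) (c : ℕ → X) (k : ℕ) : ℕ → X :=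
  fun i => if i = 0 ∨ i = k then z else c i

@[simp]
theorem closeCycle_zero (z : X) (c : ℕ → X) (k : ℕ) : closeCycle z c k 0 = z := by
  simp [closeCycle]

@[simp]
theorem closeCycle_self (z : X) (c : ℕ → X) (k : ℕ) : closeCycle z c k k = z := by
  simp [closeCycle]

variable [MetricSpace X] {f : X → X}

theorem isChain'_closeCycle {δ : ℝ} {z : X} {c : ℕ → X} {k : ℕ}
    (hc : ∀ i, f (c i) = c (i + 1)) (hk : 0 < k)
    (hδ : dist (f z) (f (c 0)) + dist (c k) z ≤ δ) :
    IsChain' f δ (closeCycle z c k) k := by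
  have h₀ : 0 ≤ dist (f z) (f (c 0)) := dist_nonneg
  have h₁ : 0 ≤ dist (c k) z := dist_nonneg
  intro i hi
  by_cases hi₀ : i = 0
  · subst hi₀
    by_cases hk₁ : k = 1
    · subst hk₁
      simp only [closeCycle_zero, zero_add, closeCycle_self]
      calc dist (f z) z ≤ dist (f z) (f (c 0)) + dist (f (c 0)) z := dist_triangle _ _ _
        _ = dist (f z) (f (c 0)) + dist (c 1) z := by rw [hc 0]
        _ ≤ δ := hδ
    · simp only [closeCycle, true_or, if_true, zero_add, one_ne_zero, false_or,
        Ne.symm hk₁, if_false, ← hc 0]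
      linarith
  · by_cases hik : i + 1 = k
    · simp only [closeCycle, hi₀, hi.ne, or_self, if_false, hik, or_true, if_true, hc i]
      linarith
    · simp only [closeCycle, hi₀, hi.ne, hik, Nat.succ_ne_zero, or_self, if_false, hc i,
        dist_self]
      linarith

theorem dist_closeCycle_gt {r : ℝ} {z w : X} {c c' : ℕ → X} {k : ℕ} (hzw : r < dist z w)
    (hc : ∀ i, r < dist (c i) (c' i)) (i : ℕ) :
    r < dist (closeCycle z c k i) (closeCycle w c' k i) := by
  unfold closeCycle
  split_ifs
  exacts [hzw, hc i]

theorem UniformContinuous.exists_pos_isChain'_closeCycle_iterate (hf : UniformContinuous f)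
    {δ : ℝ} (hδ : 0 < δ) :
    ∃ η > 0, ∀ (z x : X) (a b : ℕ), a < b → dist (f^[a] x) z < η → dist (f^[b] x) z < η →
      IsChain' f δ (closeCycle z (fun i => f^[a + i] x) (b - a)) (b - a) := by
  obtain ⟨ε, hε, hfε⟩ := Metric.uniformContinuous_iff.mp hf (δ / 2) (half_pos hδ)
  refine ⟨min ε (δ / 2), lt_min hε (half_pos hδ), fun z x a b hab ha hb => ?_⟩
  refine isChain'_closeCycle (fun i => (Function.iterate_succ_apply' f (a + i) x).symm)
    (Nat.sub_pos_of_lt hab) ?_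
  have hfirst : dist (f z) (f (f^[a + 0] x)) < δ / 2 :=
    hfε (by rw [dist_comm]; exact ha.trans_le (min_le_left _ _))
  have hlast : dist (f^[a + (b - a)] x) z < δ / 2 := by
    rw [Nat.add_sub_cancel' hab.le]
    exact hb.trans_le (min_le_right _ _)
  linarith

end Cycles

section OmegaLimit

variable {X : Type*} [MetricSpace X] {f : X → X} {x y : X} {p : X × X}

theorem mem_of_mem_omegaLimit2 {s : Set (X × X)} (hs : IsClosed s)
    (horbit : ∀ n, (f^[n] x, f^[n] y) ∈ s) (hp : p ∈ OmegaLimit2 f x y) : p ∈ s := by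
  obtain ⟨φ, -, hφ⟩ := hp
  exact hs.mem_of_tendsto hφ (Eventually.of_forall fun n => horbit (φ n))

theorem exists_lt_iterate_near_of_mem_omegaLimit2 (hp : p ∈ OmegaLimit2 f x y) {ε : ℝ}
    (hε : 0 < ε) :
    ∃ a b, a < b ∧ dist (f^[a] x) p.1 < ε ∧ dist (f^[a] y) p.2 < ε ∧
      dist (f^[b] x) p.1 < ε ∧ dist (f^[b] y) p.2 < ε := by
  obtain ⟨φ, hφmono, hφ⟩ := hp
  obtain ⟨N, hN⟩ := Metric.tendsto_atTop.mp hφ ε hε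
  have hnear : ∀ n ≥ N, dist (f^[φ n] x) p.1 < ε ∧ dist (f^[φ n] y) p.2 < ε := fun n hn => by
    simpa only [Prod.dist_eq, max_lt_iff] using hN n hn
  obtain ⟨hxa, hya⟩ := hnear N le_rfl
  obtain ⟨hxb, hyb⟩ := hnear (N + 1) N.le_succ
  exact ⟨φ N, φ (N + 1), hφmono N.lt_succ_self, hxa, hya, hxb, hyb⟩

end OmegaLimit

/-- omega-limit points of a distal pair have property*. -/
theorem omegaLimit_of_distal_propertyStar {X : Type*} [MetricSpace X] [CompactSpace X]
    (f : X → X) (hf : Continuous f) (x y : X) (h : DistalPair f x y) :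
    ∀ p ∈ OmegaLimit2 f x y, PropertyStar' f p.1 p.2 := by
  intro p hp
  set r₀ := ⨅ n : ℕ, dist (f^[n] x) (f^[n] y)
  have hr₀ : 0 < r₀ := h
  have hr : r₀ / 2 < r₀ := half_lt_self hr₀
  have hr₀_le : ∀ n, r₀ ≤ dist (f^[n] x) (f^[n] y) :=
    ciInf_le ⟨0, by rintro _ ⟨m, rfl⟩; exact dist_nonneg⟩
  have horbit : ∀ n, r₀ / 2 < dist (f^[n] x) (f^[n] y) := fun n => hr.trans_le (hr₀_le n)
  have hp_dist : r₀ / 2 < dist p.1 p.2 :=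
    hr.trans_le <| mem_of_mem_omegaLimit2 (s := {q | r₀ ≤ dist q.1 q.2})
      (isClosed_le continuous_const (continuous_fst.dist continuous_snd)) hr₀_le hp
  refine ⟨r₀ / 2, half_pos hr₀, fun δ hδ => ?_⟩
  obtain ⟨η, hη, hcycle⟩ :=
    (CompactSpace.uniformContinuous_of_continuous hf).exists_pos_isChain'_closeCycle_iterate hδ
  obtain ⟨a, b, hab, hxa, hya, hxb, hyb⟩ := exists_lt_iterate_near_of_mem_omegaLimit2 hp hη
  exact ⟨b - a, Nat.sub_pos_of_lt hab, _, _, hcycle _ _ a b hab hxa hxb,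
    hcycle _ _ a b hab hya hyb, closeCycle_zero .., closeCycle_self .., closeCycle_zero ..,
    closeCycle_self .., fun i _ => dist_closeCycle_gt hp_dist (fun j => horbit (a + j)) i⟩
end

section
/- Let X be a compact metric space and f : X → X continuous. If (x, y) ∈ X² is a proximal pair for f (liminf_{n→∞} d(fⁿ(x), fⁿ(y)) = 0), then every (z, w) in the omega-limit set ω((x,y), f × f) lies in CR(f)² and satisfies z ~ w, where ~ is the chain relation: for every δ > 0 there are m, N > 0 such that for all n ≥ N there exist δ-chains in CR(f) of length mn from z to w and from w to z. -/
open Metric Filter Set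
open scoped Classical

/-!
Let `Ω` be the ω-limit set of `(x, y)` under `f × f`. Proximality puts a diagonal point `(u, u)`
in `Ω`, and in a compact space an ω-limit set is internally chain transitive: for every `δ > 0`,
any two of its points are joined by a δ-chain inside it. In particular ω-limit sets of `f` lie in
`CR f`, and so do both projections of `Ω`. Projecting δ-chains `(z, w) → (u, u) → (z, w)` to the
coordinates gives chains `z → u`, `w → u` of a common length `k` and `u → z`, `u → w` of a common
length `l`, hence δ-cycles at `z` and at `w` and chains `z → w`, `w → z`, all of length `k + l`.
Running the cycle `n - 1` times before the connecting chain gives chains of every length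
`(k + l) n`.
-/

open Function Topology omegaLimit

section Chains

variable {X : Type*} [MetricSpace X]

def ChainIn (f : X → X) (δ : ℝ) (S : Set X) (a b : X) (k : ℕ) : Prop :=
  ∃ c : ℕ → X, IsChain' f δ c k ∧ (∀ i ≤ k, c i ∈ S) ∧ c 0 = a ∧ c k = b

namespace ChainIn

variable {f : X → X} {δ : ℝ} {S : Set X} {a b c : X} {k l : ℕ}

lemma refl (ha : a ∈ S) : ChainIn f δ S a a 0 :=
  ⟨fun _ => a, fun i hi => absurd hi (Nat.not_lt_zero i), fun _ _ => ha, rfl, rfl⟩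

lemma left_mem (h : ChainIn f δ S a b k) : a ∈ S := by
  obtain ⟨c, -, hS, h0, -⟩ := h
  exact h0 ▸ hS 0 (Nat.zero_le k)

lemma trans (h₁ : ChainIn f δ S a b k) (h₂ : ChainIn f δ S b c l) :
    ChainIn f δ S a c (k + l) := by
  obtain ⟨c₁, hc₁, hS₁, h₁0, h₁k⟩ := h₁
  obtain ⟨c₂, hc₂, hS₂, h₂0, h₂l⟩ := h₂
  refine ⟨fun i => if i < k then c₁ i else c₂ (i - k), fun i hi => ?_, fun i hi => ?_, ?_,
    by simp [h₂l]⟩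
  · rcases lt_trichotomy (i + 1) k with hlt | rfl | hgt
    · simpa [hlt, (by omega : i < k)] using hc₁ i (by omega)
    · simpa [h₂0, h₁k] using hc₁ i (Nat.lt_succ_self i)
    · have hi' : i + 1 - k = i - k + 1 := by omega
      simp only [if_neg (show ¬ i < k by omega), if_neg (show ¬ i + 1 < k by omega), hi']
      exact hc₂ (i - k) (by omega)
  · by_cases hik : i < k
    · simpa [hik] using hS₁ i hik.le
    · simpa [hik] using hS₂ (i - k) (by omega)
  · rcases Nat.eq_zero_or_pos k with rfl | hk
    · simp [h₂0, ← h₁k, h₁0]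
    · simp [hk, h₁0]

lemma iterate (h : ChainIn f δ S a a k) (n : ℕ) : ChainIn f δ S a a (k * n) := by
  induction n with
  | zero => exact refl h.left_mem
  | succ n ih => exact ih.trans h

lemma map {Y : Type*} [MetricSpace Y] {g : Y → Y} {T : Set Y} {π : X → Y}
    (hπ : LipschitzWith 1 π) (hfg : Semiconj π f g) (hST : MapsTo π S T)
    (h : ChainIn f δ S a b k) : ChainIn g δ T (π a) (π b) k := by
  obtain ⟨c, hc, hS, h0, hk⟩ := h
  refine ⟨π ∘ c, fun i hi => ?_, fun i hi => hST (hS i hi), by simp [h0], by simp [hk]⟩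
  calc dist (g (π (c i))) (π (c (i + 1))) = dist (π (f (c i))) (π (c (i + 1))) := by
        rw [hfg.eq]
    _ ≤ dist (f (c i)) (c (i + 1)) := by simpa using hπ.dist_le_mul (f (c i)) (c (i + 1))
    _ ≤ δ := hc i hi

end ChainIn

lemma chainRel_of_forall_chainIn {f : X → X} {z w : X}
    (h : ∀ δ > 0, ∃ b > 0, ChainIn f δ (CR f) z z b ∧ ChainIn f δ (CR f) w w b ∧
      ChainIn f δ (CR f) z w b ∧ ChainIn f δ (CR f) w z b) :
    ChainRel f z w := by
  intro δ hδ
  obtain ⟨b, hb, hzz, hww, hzw, hwz⟩ := h δ hδ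
  refine ⟨b, hb, 1, one_pos, fun n hn => ?_⟩
  have hbn : b * (n - 1) + b = b * n := by
    rw [← Nat.mul_succ, Nat.succ_eq_add_one, Nat.sub_add_cancel hn]
  exact ⟨hbn ▸ (hzz.iterate (n - 1)).trans hzw, hbn ▸ (hww.iterate (n - 1)).trans hwz⟩

end Chains

section OmegaLimit

variable {X : Type*} [MetricSpace X]

lemma UniformContinuous.exists_dist_le_sub {g : X → X} (hg : UniformContinuous g) {δ : ℝ}
    (hδ : 0 < δ) :
    ∃ η > 0, ∀ a b, dist a b ≤ η → dist (g a) (g b) ≤ δ - η := by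
  obtain ⟨t, ht, hgt⟩ := Metric.uniformContinuous_iff.1 hg (δ / 2) (half_pos hδ)
  refine ⟨min (t / 2) (δ / 2), by positivity, fun a b hab => ?_⟩
  have := hgt (hab.trans_lt ((min_le_left _ _).trans_lt (half_lt_self ht)))
  linarith [min_le_right (t / 2) (δ / 2)]

lemma isChain'_of_forall_dist_iterate_le {g : X → X} {δ η : ℝ} {z : X} {c : ℕ → X}
    {k : ℕ} (hη : ∀ a b, dist a b ≤ η → dist (g a) (g b) ≤ δ - η)
    (hc : ∀ i ≤ k, dist (g^[i] z) (c i) ≤ η) : IsChain' g δ c k := by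
  intro i hi
  calc dist (g (c i)) (c (i + 1))
      ≤ dist (g (c i)) (g (g^[i] z)) + dist (g^[i + 1] z) (c (i + 1)) := by
        rw [iterate_succ_apply']; exact dist_triangle _ _ _
    _ ≤ (δ - η) + η :=
        add_le_add (hη _ _ (by rw [dist_comm]; exact hc i hi.le)) (hc (i + 1) hi)
    _ = δ := sub_add_cancel δ η

variable [CompactSpace X] {g : X → X} {p : X}

lemma exists_seq_mem_omegaLimit_tendsto_dist :
    ∃ q : ℕ → X, (∀ n, q n ∈ ω⁺ (fun n => g^[n]) {p}) ∧
      Tendsto (fun n => dist (g^[n] p) (q n)) atTop (𝓝 0) := by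
  have hne : (ω⁺ (fun n => g^[n]) {p}).Nonempty :=
    nonempty_omegaLimit _ _ _ (singleton_nonempty p)
  choose q hqΩ hq using fun n =>
    (isClosed_omegaLimit _ _ _).isCompact.exists_infDist_eq_dist hne (g^[n] p)
  refine ⟨q, hqΩ, ?_⟩
  simp_rw [← hq]
  refine tendsto_order.2 ⟨fun a ha => Eventually.of_forall fun n => ha.trans_le infDist_nonneg,
    fun ε hε => ?_⟩
  filter_upwards [eventually_mapsTo_of_isOpen_of_omegaLimit_subset atTop _ {p}
    isOpen_thickening (self_subset_thickening hε (ω⁺ (fun n => g^[n]) {p}))] with n hn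
  exact (mem_thickening_iff_infDist_lt hne).1 (hn (mem_singleton p))

lemma exists_chainIn_of_mem_omegaLimit (hg : Continuous g) {A B : X}
    (hA : A ∈ ω⁺ (fun n => g^[n]) {p}) (hB : B ∈ ω⁺ (fun n => g^[n]) {p}) {δ : ℝ}
    (hδ : 0 < δ) :
    ∃ k > 0, ChainIn g δ (ω⁺ (fun n => g^[n]) {p}) A B k := by
  obtain ⟨η, hη, hgη⟩ :=
    (CompactSpace.uniformContinuous_of_continuous hg).exists_dist_le_sub hδ
  obtain ⟨q, hqΩ, hq⟩ := exists_seq_mem_omegaLimit_tendsto_dist (g := g) (p := p)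
  obtain ⟨N, hN⟩ := eventually_atTop.1 ((tendsto_order.1 hq).2 η hη)
  have hfreq {C : X} (hC : C ∈ ω⁺ (fun n => g^[n]) {p}) :
      ∃ᶠ n in atTop, dist (g^[n] p) C < η :=
    ((mem_omegaLimit_singleton_iff_mapClusterPt _ _ _ _).1 hC).frequently (ball_mem_nhds C hη)
  obtain ⟨n₁, hn₁N, hn₁⟩ := (hfreq hA).forall_exists_of_atTop N
  obtain ⟨n₂, hn₂, hn₂B⟩ := (hfreq hB).forall_exists_of_atTop (n₁ + 1)
  -- the orbit from time `n₁` to `n₂`, each point moved to a nearby point of the ω-limit set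
  let c : ℕ → X := fun i => if i = 0 then A else if n₁ + i < n₂ then q (n₁ + i) else B
  refine ⟨n₂ - n₁, by omega, c, isChain'_of_forall_dist_iterate_le hgη (z := g^[n₁] p)
    fun i hi => ?_, fun i _ => ?_, by simp [c], ?_⟩
  · rw [← iterate_add_apply, add_comm]
    by_cases hi0 : i = 0
    · simpa [c, hi0] using hn₁.le
    by_cases hin : n₁ + i < n₂
    · simpa [c, hi0, hin] using (hN (n₁ + i) (by omega)).le
    · simpa [c, hi0, hin, (by omega : n₁ + i = n₂)] using hn₂B.le
  · simp only [c]
    split_ifs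
    exacts [hA, hqΩ _, hB]
  · simp only [c, if_neg (show n₂ - n₁ ≠ 0 by omega),
      if_neg (show ¬ n₁ + (n₂ - n₁) < n₂ by omega)]

lemma omegaLimit_subset_CR (hg : Continuous g) : ω⁺ (fun n => g^[n]) {p} ⊆ CR g := by
  intro A hA δ hδ
  obtain ⟨k, hk, c, hc, -, h0, hk'⟩ := exists_chainIn_of_mem_omegaLimit hg hA hA hδ
  exact ⟨k, hk, c, hc, h0, hk'⟩

end OmegaLimit

section Product

lemma mapsTo_fst_omegaLimit_prodMap {α β : Type*} [TopologicalSpace α] [TopologicalSpace β]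
    (f : α → α) (g : β → β) (x : α) (y : β) :
    MapsTo Prod.fst (ω⁺ (fun n => (Prod.map f g)^[n]) {(x, y)}) (ω⁺ (fun n => f^[n]) {x}) :=
  mapsTo_omegaLimit (s' := {x}) _ (mapsTo_singleton.2 rfl)
    (fun n _ => by rw [Prod.map_iterate]; rfl) continuous_fst

lemma mapsTo_snd_omegaLimit_prodMap {α β : Type*} [TopologicalSpace α] [TopologicalSpace β]
    (f : α → α) (g : β → β) (x : α) (y : β) :
    MapsTo Prod.snd (ω⁺ (fun n => (Prod.map f g)^[n]) {(x, y)}) (ω⁺ (fun n => g^[n]) {y}) :=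
  mapsTo_omegaLimit (s' := {y}) _ (mapsTo_singleton.2 rfl)
    (fun n _ => by rw [Prod.map_iterate]; rfl) continuous_snd

variable {X : Type*} [MetricSpace X] {f : X → X} {x y : X}

lemma mem_omegaLimit_prodMap_of_mem_omegaLimit2 {p : X × X} (hp : p ∈ OmegaLimit2 f x y) :
    p ∈ ω⁺ (fun n => (Prod.map f f)^[n]) {(x, y)} := by
  obtain ⟨φ, hφ, hlim⟩ := hp
  rw [mem_omegaLimit_singleton_iff_mapClusterPt]
  exact .of_comp hφ.tendsto_atTop (by simpa [Prod.map_iterate, comp_def] using hlim.mapClusterPt)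

lemma exists_diag_mem_omegaLimit_of_proximalPair [CompactSpace X] (h : ProximalPair f x y) :
    ∃ u, (u, u) ∈ ω⁺ (fun n => (Prod.map f f)^[n]) {(x, y)} := by
  set d : ℕ → ℝ := fun n => dist (f^[n] x) (f^[n] y)
  have hd : MapClusterPt 0 atTop d := by
    have hbdd : IsBoundedUnder (· ≤ ·) atTop d := isBoundedUnder_of ⟨diam (univ : Set X),
      fun _ => dist_le_diam_of_mem isCompact_univ.isBounded trivial trivial⟩
    have := ClusterPt.limsInf (f := map d atTop) hbdd.isCoboundedUnder_ge
      (isBoundedUnder_of ⟨0, fun n => dist_nonneg⟩)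
    rwa [← h]
  -- the times at which the pair is close
  set L := atTop ⊓ comap d (𝓝 0)
  have : L.NeBot := by
    rw [← map_neBot_iff d, Filter.push_pull, inf_comm]
    exact hd.neBot
  obtain ⟨q, hq⟩ := exists_clusterPt_of_compactSpace (map (fun n => (f^[n] x, f^[n] y)) L)
  replace hq : MapClusterPt q L fun n => (f^[n] x, f^[n] y) := hq
  have hdq : dist q.1 q.2 = 0 := by
    have hlim : Tendsto d L (𝓝 0) := tendsto_comap.mono_left inf_le_right
    have hcl : MapClusterPt (dist q.1 q.2) L d :=
      hq.continuousAt_comp (continuous_fst.dist continuous_snd).continuousAt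
    exact eq_of_nhds_neBot (hcl.clusterPt.mono hlim).neBot
  refine ⟨q.1, ?_⟩
  rw [mem_omegaLimit_singleton_iff_mapClusterPt,
    show (q.1, q.1) = q from Prod.ext rfl (dist_eq_zero.1 hdq)]
  simpa [Prod.map_iterate] using hq.mono inf_le_left

end Product

/-- omega-limit points of a proximal pair are chain related. -/
theorem omegaLimit_of_proximal_chainRel {X : Type*} [MetricSpace X] [CompactSpace X]
    (f : X → X) (hf : Continuous f) (x y : X) (h : ProximalPair f x y) :
    ∀ p ∈ OmegaLimit2 f x y, p.1 ∈ CR f ∧ p.2 ∈ CR f ∧ ChainRel f p.1 p.2 := by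
  intro p hp
  have hpΩ := mem_omegaLimit_prodMap_of_mem_omegaLimit2 hp
  obtain ⟨u, huΩ⟩ := exists_diag_mem_omegaLimit_of_proximalPair h
  have hfst := (mapsTo_fst_omegaLimit_prodMap f f x y).mono_right (omegaLimit_subset_CR hf)
  have hsnd := (mapsTo_snd_omegaLimit_prodMap f f x y).mono_right (omegaLimit_subset_CR hf)
  refine ⟨hfst hpΩ, hsnd hpΩ, chainRel_of_forall_chainIn fun δ hδ => ?_⟩
  obtain ⟨k, -, hpu⟩ := exists_chainIn_of_mem_omegaLimit (hf.prodMap hf) hpΩ huΩ hδ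
  obtain ⟨l, hl, hup⟩ := exists_chainIn_of_mem_omegaLimit (hf.prodMap hf) huΩ hpΩ hδ
  have hzu := hpu.map (π := Prod.fst) LipschitzWith.prod_fst (fun _ => rfl) hfst
  have hwu := hpu.map (π := Prod.snd) LipschitzWith.prod_snd (fun _ => rfl) hsnd
  have huz := hup.map (π := Prod.fst) LipschitzWith.prod_fst (fun _ => rfl) hfst
  have huw := hup.map (π := Prod.snd) LipschitzWith.prod_snd (fun _ => rfl) hsnd
  exact ⟨k + l, by omega, hzu.trans huz, hwu.trans huw, hzu.trans huw, hwu.trans huz⟩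
end

section
/- Let X be a compact metric space and f : X → X continuous such that f|_{CR(f)} : CR(f) → CR(f) has the shadowing property. If (x, y) ∈ CR(f)² with x ≠ y and x ~ y (chain relation), then x and y can be distinguished by a positive-entropy open cover: for every ε with 0 < ε < d(x,y)/2 there exists a positive integer a such that h(f, {B_ε(x)^c, B_ε(y)^c}) ≥ (1/a)·log 2 > 0, where B_ε denotes the open ε-ball. In particular (x, y) is an entropy pair for f. -/
open Metric Filter Set
open scoped Classical

/-! Chain relatedness of `x` and `y` gives `δ`-chains in `CR f` of one common length `L` from
either point to either point. Concatenating them along an arbitrary itinerary `s : ℕ → Bool`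
yields a pseudo-orbit in `CR f`, which shadowing turns into an orbit that is `ε`-close to `x` or
to `y` at the times `j * L`, as `s j` dictates. Orbits with different itineraries up to time
`M * L` cannot share an element of the join of `{B_ε(x)ᶜ, B_ε(y)ᶜ}` over `M * L` steps, so every
subcover of that join has at least `2 ^ M` elements, and the cover has entropy `≥ log 2 / L`. -/

section Concatenation

variable {X : Type*}

def concatChains (L : ℕ) (c : ℕ → ℕ → X) : ℕ → X :=
  fun i => c (i / L) (i % L)

theorem concatChains_mul {L : ℕ} (hL : 0 < L) (c : ℕ → ℕ → X) (j : ℕ) :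
    concatChains L c (j * L) = c j 0 := by
  simp [concatChains, Nat.mul_div_cancel _ hL]

theorem concatChains_succ {L : ℕ} (hL : 0 < L) {c : ℕ → ℕ → X}
    (hjoin : ∀ j, c j L = c (j + 1) 0) (i : ℕ) :
    concatChains L c (i + 1) = c (i / L) (i % L + 1) := by
  have hdiv := Nat.div_add_mod i L
  have hmod := Nat.mod_lt i hL
  rcases (Nat.succ_le_of_lt hmod).lt_or_eq with hlt | heq
  · have : i + 1 = L * (i / L) + (i % L + 1) := by omega
    rw [concatChains, this, Nat.mul_add_div hL, Nat.mul_add_mod, Nat.div_eq_of_lt hlt,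
      Nat.mod_eq_of_lt hlt, add_zero]
  · have : i + 1 = (i / L + 1) * L := by rw [add_mul, one_mul, mul_comm]; omega
    rw [this, concatChains_mul hL, ← hjoin, show i % L + 1 = L by omega]

end Concatenation

section Chains

variable {X : Type*} [MetricSpace X] {f : X → X} {δ : ℝ}

def IsCRChain (f : X → X) (δ : ℝ) (c : ℕ → X) (k : ℕ) (a b : X) : Prop :=
  IsChain' f δ c k ∧ (∀ i ≤ k, c i ∈ CR f) ∧ c 0 = a ∧ c k = b

def chainAppend (c₁ c₂ : ℕ → X) (k : ℕ) : ℕ → X :=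
  fun i => if i ≤ k then c₁ i else c₂ (i - k)

theorem IsCRChain.append {c₁ c₂ : ℕ → X} {k₁ k₂ : ℕ} {a b d : X}
    (h₁ : IsCRChain f δ c₁ k₁ a b) (h₂ : IsCRChain f δ c₂ k₂ b d) :
    IsCRChain f δ (chainAppend c₁ c₂ k₁) (k₁ + k₂) a d := by
  obtain ⟨hc₁, hm₁, h₁0, h₁k⟩ := h₁
  obtain ⟨hc₂, hm₂, h₂0, h₂k⟩ := h₂
  have tail_eq : ∀ i, k₁ ≤ i → chainAppend c₁ c₂ k₁ i = c₂ (i - k₁) := by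
    intro i hi
    rcases hi.eq_or_lt with rfl | hlt
    · simp [chainAppend, h₁k, h₂0]
    · simp [chainAppend, hlt.not_ge]
  refine ⟨fun i hi => ?_, fun i hi => ?_, by simp [chainAppend, h₁0], ?_⟩
  · by_cases hik : i < k₁
    · simpa [chainAppend, hik.le, Nat.succ_le_of_lt hik] using hc₁ i hik
    · rw [tail_eq i (by omega), tail_eq (i + 1) (by omega), Nat.sub_add_comm (by omega)]
      exact hc₂ (i - k₁) (by omega)
  · by_cases hik : i ≤ k₁
    · simpa [chainAppend, hik] using hm₁ i hik
    · rw [tail_eq i (by omega)]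
      exact hm₂ _ (by omega)
  · rw [tail_eq _ (by omega), Nat.add_sub_cancel_left, h₂k]

theorem ChainRel.exists_crChains {x y : X} (hrel : ChainRel f x y) (hδ : 0 < δ) :
    ∃ L > 0, ∀ b b' : Bool, ∃ c : ℕ → X,
      IsCRChain f δ c L (if b then x else y) (if b' then x else y) := by
  obtain ⟨m, hm, N, hN, hc⟩ := hrel δ hδ
  have hchains : ∀ n ≥ N,
      (∃ c, IsCRChain f δ c (m * n) x y) ∧ ∃ c, IsCRChain f δ c (m * n) y x := hc
  obtain ⟨⟨cxy, hxy⟩, ⟨cyx, hyx⟩⟩ := hchains N le_rfl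
  obtain ⟨⟨cxy₂, hxy₂⟩, ⟨cyx₂, hyx₂⟩⟩ := hchains (2 * N) (by omega)
  have hL : m * (2 * N) = m * N + m * N := by ring
  refine ⟨m * N + m * N, by positivity, fun b b' => ?_⟩
  rw [hL] at hxy₂ hyx₂
  cases b <;> cases b'
  · exact ⟨_, hyx.append hxy⟩
  · exact ⟨cyx₂, hyx₂⟩
  · exact ⟨cxy₂, hxy₂⟩
  · exact ⟨_, hxy.append hyx⟩

theorem dist_concatChains_le {L : ℕ} (hL : 0 < L) {c : ℕ → ℕ → X}
    (hc : ∀ j, IsChain' f δ (c j) L) (hjoin : ∀ j, c j L = c (j + 1) 0) (i : ℕ) :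
    dist (f (concatChains L c i)) (concatChains L c (i + 1)) ≤ δ := by
  rw [concatChains_succ hL hjoin]
  exact hc _ _ (Nat.mod_lt i hL)

theorem ShadowingOnCR.exists_itinerary_points (h : ShadowingOnCR f) {x y : X}
    (hrel : ChainRel f x y) {ε : ℝ} (hε : 0 < ε) :
    ∃ L > 0, ∃ p : (ℕ → Bool) → X, ∀ s j,
      dist (f^[j * L] (p s)) (if s j then x else y) < ε := by
  obtain ⟨δ, hδ, hsh⟩ := h (ε / 2) (by positivity)
  obtain ⟨L, hL, hblk⟩ := hrel.exists_crChains hδ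
  choose blk hblk using hblk
  have hpoint : ∀ s : ℕ → Bool, ∃ p ∈ CR f, ∀ i,
      dist (f^[i] p) (concatChains L (fun j => blk (s j) (s (j + 1))) i) ≤ ε / 2 := by
    intro s
    have hjoin : ∀ j, blk (s j) (s (j + 1)) L = blk (s (j + 1)) (s (j + 1 + 1)) 0 := fun j =>
      (hblk _ _).2.2.2.trans (hblk _ _).2.2.1.symm
    refine hsh _ (fun i => (hblk _ _).2.1 _ (Nat.mod_lt i hL).le)
      (dist_concatChains_le hL (fun j => (hblk _ _).1) hjoin)
  choose p _ hp using hpoint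
  refine ⟨L, hL, p, fun s j => ?_⟩
  have := hp s (j * L)
  rw [concatChains_mul hL, (hblk _ _).2.2.1] at this
  linarith

end Chains

section Entropy

variable {X : Type*} {f : X → X} {ι : Type*}

/-- Cardinalities of the finite subcovers of the join `⋁_{i<n} f⁻ⁱ U`. -/
def joinSubcoverCards (f : X → X) (U : ι → Set X) (n : ℕ) : Set ℕ :=
  {m | ∃ s : Finset (Fin n → ι), s.card = m ∧
    (⋃ g ∈ s, ⋂ i : Fin n, f^[(i : ℕ)] ⁻¹' U (g i)) = Set.univ}

noncomputable def joinCoverNumber (f : X → X) (U : ι → Set X) (n : ℕ) : ℕ :=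
  sInf (joinSubcoverCards f U n)

theorem card_pow_mem_joinSubcoverCards [Fintype ι] {U : ι → Set X} (hU : ∀ z, ∃ b, z ∈ U b)
    (n : ℕ) : Fintype.card ι ^ n ∈ joinSubcoverCards f U n := by
  choose g hg using hU
  refine ⟨Finset.univ, by simp, Set.eq_univ_of_forall fun z => ?_⟩
  simp only [Set.mem_iUnion, Set.mem_iInter, Set.mem_preimage]
  exact ⟨fun i => g (f^[i] z), Finset.mem_univ _, fun i => hg _⟩

theorem joinCoverNumber_le_card_pow [Fintype ι] {U : ι → Set X} (hU : ∀ z, ∃ b, z ∈ U b)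
    (n : ℕ) : joinCoverNumber f U n ≤ Fintype.card ι ^ n :=
  Nat.sInf_le (card_pow_mem_joinSubcoverCards hU n)

theorem two_pow_le_joinCoverNumber {U : Bool → Set X} (hU : ∀ z, ∃ b, z ∈ U b) {L : ℕ}
    (hL : 0 < L) (p : (ℕ → Bool) → X) (hp : ∀ s j, f^[j * L] (p s) ∉ U (s j)) (M : ℕ) :
    2 ^ M ≤ joinCoverNumber f U (M * L) := by
  obtain ⟨s, hcard, hcover⟩ :=
    Nat.sInf_mem ⟨_, card_pow_mem_joinSubcoverCards (f := f) hU (M * L)⟩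
  rw [joinCoverNumber, ← hcard]
  rw [Set.eq_univ_iff_forall] at hcover
  let extend (t : Fin M → Bool) : ℕ → Bool := fun j => if h : j < M then t ⟨j, h⟩ else false
  have hmem (t : Fin M → Bool) : ∃ g ∈ s, ∀ i : Fin (M * L), f^[i] (p (extend t)) ∈ U (g i) := by
    simpa only [Set.mem_iUnion, Set.mem_iInter, Set.mem_preimage, exists_prop] using
      hcover (p (extend t))
  choose g hgs hgU using hmem
  have htime (j : Fin M) : (j : ℕ) * L < M * L := Nat.mul_lt_mul_of_pos_right j.2 hL
  have hsymbol (t : Fin M → Bool) (j : Fin M) : g t ⟨j * L, htime j⟩ = !t j := by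
    have hj := hp (extend t) j
    rw [show extend t j = t j by simp [extend]] at hj
    exact Bool.eq_not_of_ne fun h => hj (h ▸ hgU t ⟨j * L, htime j⟩)
  calc 2 ^ M = (Finset.univ : Finset (Fin M → Bool)).card := by simp
    _ ≤ s.card := Finset.card_le_card_of_injOn g (fun t _ => hgs t) fun t _ t' _ hgt =>
      funext fun j => Bool.not_inj <| by rw [← hsymbol, ← hsymbol, hgt]

theorem entropyOfCover_eq_limsup [MetricSpace X] (U : ι → Set X) :
    entropyOfCover f U = limsup (fun n : ℕ => Real.log (joinCoverNumber f U n) / n) atTop :=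
  rfl

theorem log_two_div_le_limsup_log_div {L : ℕ} (hL : 0 < L) {m : ℕ → ℕ} (hlo : ∀ M, 2 ^ M ≤ m (M * L))
    (hup : ∀ n, m n ≤ 2 ^ n) :
    Real.log 2 / L ≤ limsup (fun n : ℕ => Real.log (m n) / n) atTop := by
  have hlog_le : ∀ n, Real.log (m n) ≤ n * Real.log 2 := fun n => by
    rcases (m n).eq_zero_or_pos with h0 | hpos
    · simp [h0]; positivity
    · rw [← Real.log_pow]
      exact Real.log_le_log (by exact_mod_cast hpos) (by exact_mod_cast hup n)
  refine le_limsup_of_frequently_le (frequently_atTop.mpr fun a => ⟨(a + 1) * L, ?_, ?_⟩)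
    (isBoundedUnder_of ⟨Real.log 2, fun n => div_le_of_le_mul₀ (by positivity) (by positivity)
      (by rw [mul_comm]; exact hlog_le n)⟩)
  · nlinarith
  · have hpow : ((2 : ℝ) ^ (a + 1)) ≤ m ((a + 1) * L) := by exact_mod_cast hlo (a + 1)
    calc Real.log 2 / L = Real.log (2 ^ (a + 1)) / ((a + 1) * L : ℕ) := by
          rw [Real.log_pow]
          push_cast
          field_simp
      _ ≤ Real.log (m ((a + 1) * L)) / ((a + 1) * L : ℕ) := by gcongr

end Entropy

theorem ShadowingOnCR.exists_log_two_div_le_entropyOfCover {X : Type*} [MetricSpace X] {f : X → X}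
    (h : ShadowingOnCR f) {x y : X} (hrel : ChainRel f x y) {ε : ℝ} (hε : 0 < ε)
    {A B : Set X} (hA : ball x ε ⊆ A) (hB : ball y ε ⊆ B) (hAB : Disjoint A B) :
    ∃ L : ℕ, 0 < L ∧ Real.log 2 / L ≤ entropyOfCover f (fun b : Bool => if b then Aᶜ else Bᶜ) := by
  obtain ⟨L, hL, p, hp⟩ := h.exists_itinerary_points hrel hε
  have hcover : ∀ z, ∃ b : Bool, z ∈ if b then Aᶜ else Bᶜ := fun z => by
    by_cases hz : z ∈ A
    · exact ⟨false, by simpa using hAB.notMem_of_mem_left hz⟩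
    · exact ⟨true, by simpa using hz⟩
  have hsep : ∀ s j, f^[j * L] (p s) ∉ if s j then Aᶜ else Bᶜ := fun s j => by
    have := mem_ball.mpr (hp s j)
    cases hs : s j <;> rw [hs] at this
    · simpa using hB this
    · simpa using hA this
  refine ⟨L, hL, ?_⟩
  rw [entropyOfCover_eq_limsup]
  exact log_two_div_le_limsup_log_div hL (two_pow_le_joinCoverNumber hcover hL p hsep)
    (Fintype.card_bool ▸ joinCoverNumber_le_card_pow hcover)

theorem chainRel_entropyPair_general {X : Type*} [MetricSpace X]
    (f : X → X) (h : ShadowingOnCR f) (x y : X)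
    (hne : x ≠ y) (hrel : ChainRel f x y) :
    (∀ ε : ℝ, 0 < ε → ε < dist x y / 2 → ∃ a : ℕ, 0 < a ∧
      0 < Real.log 2 / a ∧
      Real.log 2 / a ≤ entropyOfCover f
        (fun b : Bool => if b then (Metric.ball x ε)ᶜ else (Metric.ball y ε)ᶜ)) ∧
    EntropyPair f x y := by
  refine ⟨fun ε hε hεd => ?_, hne, fun A B _ _ hxA hyB hAB => ?_⟩
  · obtain ⟨L, hL, hent⟩ := h.exists_log_two_div_le_entropyOfCover hrel hε subset_rfl subset_rfl
      (ball_disjoint_ball (by linarith))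
    exact ⟨L, hL, by positivity, hent⟩
  · obtain ⟨ε₁, hε₁, hA⟩ := Metric.mem_nhds_iff.mp (mem_interior_iff_mem_nhds.mp hxA)
    obtain ⟨ε₂, hε₂, hB⟩ := Metric.mem_nhds_iff.mp (mem_interior_iff_mem_nhds.mp hyB)
    obtain ⟨L, hL, hent⟩ := h.exists_log_two_div_le_entropyOfCover hrel (lt_min hε₁ hε₂)
      ((ball_subset_ball (min_le_left _ _)).trans hA)
      ((ball_subset_ball (min_le_right _ _)).trans hB) hAB
    exact (by positivity : (0 : ℝ) < Real.log 2 / L).trans_le hent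

/-- under shadowing on `CR f`, chain related distinct points
are entropy pairs, with a quantitative entropy bound. -/
theorem chainRel_entropyPair {X : Type*} [MetricSpace X] [CompactSpace X]
    (f : X → X) (hf : Continuous f) (h : ShadowingOnCR f) (x y : X)
    (hx : x ∈ CR f) (hy : y ∈ CR f) (hne : x ≠ y) (hrel : ChainRel f x y) :
    (∀ ε : ℝ, 0 < ε → ε < dist x y / 2 → ∃ a : ℕ, 0 < a ∧
      0 < Real.log 2 / a ∧
      Real.log 2 / a ≤ entropyOfCover f
        (fun b : Bool => if b then (Metric.ball x ε)ᶜ else (Metric.ball y ε)ᶜ)) ∧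
    EntropyPair f x y :=
  chainRel_entropyPair_general f h x y hne hrel
end
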